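/- For the projector π_1 associated to the q-stuffle, applied to a letter y_k one has π_1(y_k) = y_k + Σ_{l≥2} ((-q)^{l-1}/l) Σ_{j_1+...+j_l = k, j_i ≥ 1} y_{j_1} ... y_{j_l}. -/

import Mathlib

open scoped BigOperators

/-- Words over the alphabet `Y = {y_s : s ≥ 1}`: a word is a list of positive integers. -/
abbrev Word : Type := List ℕ+

/-- The weight of a word `y_{i_1} ⋯ y_{i_r}` is `i_1 + ⋯ + i_r`. -/
def weight (w : Word) : ℕ := (w.map (fun s => (s : ℕ))).sum

/-- Noncommutative polynomials over `R` on the alphabet `Y`. -/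
abbrev NCPoly (R : Type) [CommRing R] : Type := Word →₀ R

variable {R : Type} [CommRing R]

/-- The `q`-stuffle product of two words, as a polynomial. -/
noncomputable def stuf (q : R) : Word → Word → NCPoly R
  | [], v => Finsupp.single v 1
  | u, [] => Finsupp.single u 1
  | s :: u, t :: v =>
      Finsupp.mapDomain (fun w => s :: w) (stuf q u (t :: v)) +
      Finsupp.mapDomain (fun w => t :: w) (stuf q (s :: u) v) +
      q • Finsupp.mapDomain (fun w => (s + t) :: w) (stuf q u v)
  termination_by u v => u.length + v.length
  decreasing_by all_goals (simp only [List.length_cons]; omega)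

/-- Bilinear extension of the `q`-stuffle product to polynomials. -/
noncomputable def stufP (q : R) (P Q : NCPoly R) : NCPoly R :=
  P.sum fun u a => Q.sum fun v b => (a * b) • stuf q u v

/-- Concatenation product of polynomials. -/
noncomputable def concP (P Q : NCPoly R) : NCPoly R :=
  P.sum fun u a => Q.sum fun v b => Finsupp.single (u ++ v) (a * b)

/-- Concatenation product of a list of polynomials. -/
noncomputable def concList : List (NCPoly R) → NCPoly R
  | [] => Finsupp.single [] 1
  | P :: L => concP P (concList L)

/-- `q`-stuffle product of a list of words. -/
noncomputable def stufList (q : R) : List Word → NCPoly R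
  | [] => Finsupp.single [] 1
  | u :: L => stufP q (Finsupp.single u 1) (stufList q L)

/-- A formal power series over `Y` is a function `Word → R`; `S w = ⟨S, w⟩`. -/
def unitS : Word → R := fun w => if w = [] then 1 else 0

/-- Pairing `⟨S, P⟩ = Σ_w ⟨S,w⟩⟨P,w⟩` between a series and a polynomial. -/
noncomputable def pairS (S : Word → R) (P : NCPoly R) : R := P.sum fun w c => c * S w

/-- Pairing between two polynomials. -/
noncomputable def pairP (P Q : NCPoly R) : R := Q.sum fun w c => c * P w

/-- The finite set of all words of weight `n`. -/
noncomputable def wordsOfWeight : ℕ → Finset Word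
  | 0 => {[]}
  | n + 1 =>
      (Finset.range (n + 1)).attach.biUnion fun i =>
        (wordsOfWeight i.1).image fun w => (n + 1 - i.1).toPNat' :: w
  termination_by n => n
  decreasing_by exact Finset.mem_range.mp i.2

/-- All words of weight at most `n`. -/
noncomputable def wordsUpTo (n : ℕ) : Finset Word := (Finset.range (n + 1)).biUnion wordsOfWeight

/-- The `q`-stuffle product of two formal power series (coefficient-wise, the sum
is finite since the `q`-stuffle preserves weight). -/
noncomputable def stufS (q : R) (S T : Word → R) : Word → R :=
  fun w => ∑ u ∈ wordsUpTo (weight w), ∑ v ∈ wordsUpTo (weight w),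
    S u * T v * (stuf q u v) w

/-- `q`-stuffle product of a list of series. -/
noncomputable def stufSList (q : R) (L : List (Word → R)) : Word → R :=
  L.foldr (stufS q) unitS

/-- All ways of writing a word as a concatenation of nonempty words. -/
noncomputable def splits : Word → Finset (List Word)
  | [] => {[]}
  | a :: v =>
      (Finset.range (v.length + 1)).attach.biUnion fun i =>
        (splits (v.drop i.1)).image fun L => (a :: v.take i.1) :: L
  termination_by w => w.length
  decreasing_by simp [List.length_drop]

/-- Lists of length `n` with entries in the finite set `s`. -/
noncomputable def tuples (s : Finset Word) : ℕ → Finset (List Word)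
  | 0 => {[]}
  | n + 1 => s.biUnion fun u => (tuples s n).image fun L => u :: L

/-- The Eulerian-type projector `π₁` associated to the `q`-stuffle:
`π₁(w) = Σ_{k≥1} ((-1)^{k-1}/k) Σ_{u_1,…,u_k ∈ Y⁺} ⟨w | u_1 ⊛_q ⋯ ⊛_q u_k⟩ u_1⋯u_k`. -/
noncomputable def qpi1 [Algebra ℚ R] (q : R) (w : Word) : NCPoly R :=
  ∑ v ∈ wordsUpTo (weight w),
    Finsupp.single v
      (∑ n ∈ Finset.Icc 1 (weight w),
        ((-1 : ℚ) ^ (n - 1) / n) •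
          ∑ L ∈ (splits v).filter (fun L => L.length = n), (stufList q L) w)

/-- The adjoint projector `π̌₁`:
`π̌₁(w) = Σ_{k≥1} ((-1)^{k-1}/k) Σ_{u_1⋯u_k = w, u_i ∈ Y⁺} u_1 ⊛_q ⋯ ⊛_q u_k`. -/
noncomputable def qpi1Check [Algebra ℚ R] (q : R) (w : Word) : NCPoly R :=
  ∑ L ∈ splits w, ((-1 : ℚ) ^ (L.length - 1) / (L.length : ℚ)) • stufList q L

/-- `S` is primitive for the coproduct dual to the `q`-stuffle:
`Δ S = S ⊗ 1 + 1 ⊗ S`, read off on the coefficient at `u ⊗ v`. -/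
def IsPrimitive (q : R) (S : Word → R) : Prop :=
  ∀ u v : Word, pairS S (stuf q u v) =
    (if v = [] then S u else 0) + (if u = [] then S v else 0)

/-- `S` is group-like for the coproduct dual to the `q`-stuffle: `Δ S = S ⊗ S`. -/
def IsGroupLike (q : R) (S : Word → R) : Prop :=
  ∀ u v : Word, pairS S (stuf q u v) = S u * S v

/-- Concatenation (Cauchy) product of two series. -/
noncomputable def concS (S T : Word → R) : Word → R :=
  fun w => ∑ i ∈ Finset.range (w.length + 1), S (w.take i) * T (w.drop i)

/-- Concatenation powers of a series. -/
noncomputable def concPow (S : Word → R) : ℕ → Word → R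
  | 0 => unitS
  | n + 1 => concS S (concPow S n)

/-- Formal logarithm `log S = Σ_{n≥1} (-1)^{n-1} (S-1)^n / n` (for `S` with constant term 1,
the sum at a word `w` has at most `|w|` nonzero terms). -/
noncomputable def logS [Algebra ℚ R] (S : Word → R) : Word → R :=
  fun w => ∑ n ∈ Finset.Icc 1 w.length,
    ((-1 : ℚ) ^ (n - 1) / n) • concPow (S - unitS) n w

/-- The product on `R⟨⟨Y⟩⟩ ⊗^ R⟨⟨Y⟩⟩` where the left factor is multiplied by `⊛_q`
and the right factor by concatenation; a tensor is a function `Word → Word → R`. -/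
noncomputable def tmul (q : R) (A B : Word → Word → R) : Word → Word → R :=
  fun w w' => ∑ i ∈ Finset.range (w'.length + 1),
    stufS q (fun u => A u (w'.take i)) (fun u => B u (w'.drop i)) w

/-- The unit `1 ⊗ 1` of the tensor algebra. -/
def unitT : Word → Word → R := fun u v => if u = [] ∧ v = [] then 1 else 0

/-- Powers in the tensor algebra. -/
noncomputable def tpow (q : R) (A : Word → Word → R) : ℕ → Word → Word → R
  | 0 => unitT
  | n + 1 => tmul q A (tpow q A n)

/-- Formal logarithm in the tensor algebra. -/
noncomputable def logT [Algebra ℚ R] (q : R) (A : Word → Word → R) : Word → Word → R :=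
  fun w w' => ∑ n ∈ Finset.Icc 1 w'.length,
    ((-1 : ℚ) ^ (n - 1) / n) • tpow q (A - unitT) n w w'

/-- The diagonal series `D_Y = Σ_w w ⊗ w`. -/
def diagT : Word → Word → R := fun u v => if u = v then 1 else 0

/-- Order on words: lexicographic extension of the order `y_1 > y_2 > ⋯` on letters
(`wlt u v` means `u < v`). -/
def wlt (u v : Word) : Prop := List.Lex (fun a b : ℕ+ => b < a) u v

/-- A word is Lyndon if it is nonempty and strictly smaller than each of its proper suffixes. -/
def IsLyndon (w : Word) : Prop :=
  w ≠ [] ∧ ∀ i, 0 < i → i < w.length → wlt w (w.drop i)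

/-- Index of the standard factorization of a Lyndon word: the right factor is the
longest proper Lyndon suffix. -/
noncomputable def stdIdx (l : Word) : ℕ :=
  sInf {i | 0 < i ∧ i < l.length ∧ IsLyndon (l.drop i)}

/-- The family `Π_l`, for `l` a Lyndon word: `Π_{y_k} = π₁(y_k)`, and
`Π_l = [Π_s, Π_r]` for the standard factorization `l = (s, r)`. -/
noncomputable def PiL [Algebra ℚ R] (q : R) : Word → NCPoly R
  | [] => Finsupp.single [] 1
  | [s] => qpi1 q [s]
  | a :: b :: w =>
      if h : 0 < stdIdx (a :: b :: w) ∧ stdIdx (a :: b :: w) < (a :: b :: w).length then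
        concP (PiL q ((a :: b :: w).take (stdIdx (a :: b :: w))))
              (PiL q ((a :: b :: w).drop (stdIdx (a :: b :: w)))) -
        concP (PiL q ((a :: b :: w).drop (stdIdx (a :: b :: w))))
              (PiL q ((a :: b :: w).take (stdIdx (a :: b :: w))))
      else 0
  termination_by w => w.length
  decreasing_by all_goals (simp only [List.length_take, List.length_drop, List.length_cons] at h ⊢; omega)

/-- The Lyndon factorization of a word into a nonincreasing product of Lyndon words
(repeatedly take the longest Lyndon prefix). -/
noncomputable def lynFact : Word → List Word
  | [] => []
  | a :: w =>
      (a :: w).take (sSup {i | i ≤ w.length ∧ IsLyndon ((a :: w).take (i + 1))} + 1) ::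
      lynFact ((a :: w).drop (sSup {i | i ≤ w.length ∧ IsLyndon ((a :: w).take (i + 1))} + 1))
  termination_by w => w.length
  decreasing_by simp only [List.length_drop, List.length_cons]; omega

/-- The PBW-type basis: `Π_w = Π_{l_1} ⋯ Π_{l_n}` for the Lyndon factorization
`w = l_1 ⋯ l_n`, `l_1 ≥ ⋯ ≥ l_n`. -/
noncomputable def PiW [Algebra ℚ R] (q : R) (w : Word) : NCPoly R :=
  concList ((lynFact w).map (PiL q))

/-!
The `q`-stuffle never shortens its arguments, so `⟨y_s | u_1 ⊛_q ⋯ ⊛_q u_k⟩` vanishes unless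
every `u_i` is a letter; for letters `y_{j_1}, …, y_{j_k}` it is `q^{k-1}` if `j_1 + ⋯ + j_k = s`
(all `k` letters contracted into one) and `0` otherwise. Hence the only factorisation of a word
`v` contributing to `π₁(y_s)` is the one into its letters, the coefficient of `v` is
`((-1)^{k-1}/k) q^{k-1}` for `|v| = k` and weight `s`, and grouping by length gives the formula.
-/

theorem weight_nil : weight [] = 0 := rfl

theorem weight_cons (a : ℕ+) (v : Word) : weight (a :: v) = a + weight v := by
  simp [weight]

theorem weight_eq_zero_iff {v : Word} : weight v = 0 ↔ v = [] := by
  cases v with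
  | nil => simp [weight_nil]
  | cons a v => simp [weight_cons]

theorem length_le_weight (v : Word) : v.length ≤ weight v := by
  induction v with
  | nil => simp [weight_nil]
  | cons a v ih => rw [weight_cons, List.length_cons]; have := a.pos; omega

theorem mem_wordsOfWeight : ∀ {n : ℕ} {w : Word}, w ∈ wordsOfWeight n ↔ weight w = n
  | 0, w => by simp [wordsOfWeight, weight_eq_zero_iff]
  | n + 1, [] => by simp [wordsOfWeight, weight_nil]
  | n + 1, a :: w => by
    rw [wordsOfWeight]
    simp only [Finset.mem_biUnion, Finset.mem_attach, Finset.mem_image, true_and, List.cons.injEq,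
      weight_cons]
    constructor
    · rintro ⟨i, w, hw, rfl, rfl⟩
      have hi := Finset.mem_range.mp i.2
      rw [mem_wordsOfWeight.mp hw, PNat.toPNat'_coe (by omega)]
      omega
    · intro h
      have hw : weight w < n + 1 := by have := a.pos; omega
      refine ⟨⟨weight w, Finset.mem_range.mpr hw⟩, w, mem_wordsOfWeight.mpr rfl, ?_, rfl⟩
      refine PNat.coe_injective ?_
      simp only [PNat.toPNat'_coe (show 0 < n + 1 - weight w by omega)]
      omega

theorem mem_wordsUpTo {n : ℕ} {w : Word} : w ∈ wordsUpTo n ↔ weight w ≤ n := by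
  simp [wordsUpTo, mem_wordsOfWeight]

theorem stuf_nil_left (q : R) (v : Word) : stuf q [] v = Finsupp.single v 1 := by
  cases v <;> simp [stuf]

theorem stuf_nil_right (q : R) (u : Word) : stuf q u [] = Finsupp.single u 1 := by
  cases u <;> simp [stuf]

theorem stuf_cons_cons (q : R) (a b : ℕ+) (u v : Word) :
    stuf q (a :: u) (b :: v) =
      Finsupp.mapDomain (fun w => a :: w) (stuf q u (b :: v)) +
      Finsupp.mapDomain (fun w => b :: w) (stuf q (a :: u) v) +
      q • Finsupp.mapDomain (fun w => (a + b) :: w) (stuf q u v) := by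
  rw [stuf]

theorem stuf_singleton_singleton (q : R) (a b : ℕ+) :
    stuf q [a] [b] =
      Finsupp.single [a, b] 1 + Finsupp.single [b, a] 1 + q • Finsupp.single [a + b] 1 := by
  simp [stuf_cons_cons, stuf_nil_left, stuf_nil_right, Finsupp.mapDomain_single]

theorem stuf_singleton_singleton_apply_singleton (q : R) (a b s : ℕ+) :
    stuf q [a] [b] [s] = if a + b = s then q else 0 := by
  simp [stuf_singleton_singleton, Finsupp.single_apply]

theorem exists_of_mapDomain_cons_apply_ne_zero {c : ℕ+} {P : NCPoly R} {w : Word}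
    (h : Finsupp.mapDomain (fun w => c :: w) P w ≠ 0) : ∃ w', w = c :: w' ∧ P w' ≠ 0 := by
  obtain ⟨w', hw', rfl⟩ :=
    Finset.mem_image.mp (Finsupp.mapDomain_support (Finsupp.mem_support_iff.mpr h))
  exact ⟨w', rfl, Finsupp.mem_support_iff.mp hw'⟩

theorem length_le_of_stuf_apply_ne_zero (q : R) :
    ∀ {u v w : Word}, stuf q u v w ≠ 0 → u.length ≤ w.length ∧ v.length ≤ w.length
  | [], v, w, h => by
    rw [stuf_nil_left, Finsupp.single_apply, ite_ne_right_iff] at h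
    simp [h.1]
  | a :: u, [], w, h => by
    rw [stuf_nil_right, Finsupp.single_apply, ite_ne_right_iff] at h
    simp [← h.1]
  | a :: u, b :: v, w, h => by
    rw [stuf_cons_cons] at h
    have : Finsupp.mapDomain (fun w => a :: w) (stuf q u (b :: v)) w ≠ 0 ∨
        Finsupp.mapDomain (fun w => b :: w) (stuf q (a :: u) v) w ≠ 0 ∨
        Finsupp.mapDomain (fun w => (a + b) :: w) (stuf q u v) w ≠ 0 := by
      by_contra! h'
      simp [h'] at h
    rcases this with h | h | h <;>
    · obtain ⟨w, rfl, hw⟩ := exists_of_mapDomain_cons_apply_ne_zero h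
      have := length_le_of_stuf_apply_ne_zero q hw
      simp only [List.length_cons] at this ⊢
      omega
termination_by u v => u.length + v.length

theorem stuf_apply_eq_zero_of_length_lt (q : R) {u v w : Word} (h : w.length < v.length) :
    stuf q u v w = 0 := by
  by_contra h'
  exact absurd (length_le_of_stuf_apply_ne_zero q h').2 (not_le.mpr h)

theorem stuf_singleton_apply_singleton_eq_zero (q : R) {a s : ℕ+} {v : Word} (hv : v ≠ [])
    (h : ∀ b, v = [b] → a + b ≠ s) : stuf q [a] v [s] = 0 := by
  match v, hv with
  | [b], _ => rw [stuf_singleton_singleton_apply_singleton, if_neg (h b rfl)]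
  | _ :: _ :: _, _ => exact stuf_apply_eq_zero_of_length_lt q (by simp)

theorem stufP_single_left (q : R) (u : Word) (P : NCPoly R) :
    stufP q (Finsupp.single u 1) P = P.sum fun v b => b • stuf q u v := by
  simp [stufP, Finsupp.sum_single_index]

theorem length_le_of_stufList_apply_ne_zero (q : R) :
    ∀ {L : List Word} {w : Word}, stufList q L w ≠ 0 → ∀ u ∈ L, u.length ≤ w.length
  | [], _, _ => by simp
  | u :: L, w, h => by
    rw [stufList, stufP_single_left, Finsupp.sum_apply] at h
    obtain ⟨v, hv, hne⟩ := Finset.exists_ne_zero_of_sum_ne_zero h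
    have hstuf := length_le_of_stuf_apply_ne_zero q (right_ne_zero_of_smul hne)
    rintro u' (_ | ⟨_, hu'⟩)
    · exact hstuf.1
    · exact (length_le_of_stufList_apply_ne_zero q (Finsupp.mem_support_iff.mp hv) u' hu').trans
        hstuf.2

theorem stufP_singleton_apply_add (q : R) {P : NCPoly R} (hP : P [] = 0) (a b : ℕ+) :
    stufP q (Finsupp.single [a] 1) P [a + b] = q * P [b] := by
  rw [stufP_single_left, Finsupp.sum_apply, Finsupp.sum_eq_single [b]]
  · rw [Finsupp.smul_apply, stuf_singleton_singleton_apply_singleton, if_pos rfl, smul_eq_mul,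
      mul_comm]
  · intro v _ hvb
    rcases eq_or_ne v [] with rfl | hv
    · simp [hP]
    · rw [Finsupp.smul_apply, stuf_singleton_apply_singleton_eq_zero q hv, smul_zero]
      rintro c rfl hc
      exact hvb (by rw [add_left_cancel hc])
  · simp

theorem stufP_singleton_apply_of_le (q : R) {P : NCPoly R} (hP : P [] = 0) {a s : ℕ+}
    (h : s ≤ a) :
    stufP q (Finsupp.single [a] 1) P [s] = 0 := by
  rw [stufP_single_left, Finsupp.sum_apply, Finsupp.sum]
  refine Finset.sum_eq_zero fun v _ => ?_
  rcases eq_or_ne v [] with rfl | hv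
  · simp [hP]
  · rw [Finsupp.smul_apply, stuf_singleton_apply_singleton_eq_zero q hv, smul_zero]
    rintro b rfl hb
    exact absurd h (not_le.mpr (hb ▸ PNat.lt_add_right a b))

theorem stufList_map_singleton_apply_singleton (q : R) :
    ∀ {v : Word}, v ≠ [] → ∀ s : ℕ+,
      stufList q (v.map fun a => [a]) [s] = if weight v = s then q ^ (v.length - 1) else 0
  | [a], _, s => by
    simp [stufList, stufP_single_left, stuf_nil_right, Finsupp.single_apply, weight_cons,
      weight_nil, PNat.coe_inj]
  | a :: c :: v, _, s => by
    have hnil : stufList q ((c :: v).map fun a => [a]) [] = 0 := by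
      by_contra h
      simpa using length_le_of_stufList_apply_ne_zero q h [c] (by simp)
    rw [List.map_cons, stufList]
    rcases lt_or_ge a s with has | hsa
    · obtain ⟨b, rfl⟩ : ∃ b, s = a + b := ⟨s - a, (PNat.add_sub_of_lt has).symm⟩
      rw [stufP_singleton_apply_add q hnil,
        stufList_map_singleton_apply_singleton q (List.cons_ne_nil c v) b]
      simp only [weight_cons, PNat.add_coe, List.length_cons]
      split_ifs <;> first | omega | simp [pow_succ']
    · rw [stufP_singleton_apply_of_le q hnil hsa, if_neg]
      rw [weight_cons, weight_cons]
      have := c.pos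
      have : (s : ℕ) ≤ a := hsa
      omega

theorem splits_nil : splits ([] : Word) = {[]} := by rw [splits]

theorem mem_splits_cons {a : ℕ+} {v : Word} {L : List Word} :
    L ∈ splits (a :: v) ↔
      ∃ i ≤ v.length, ∃ L' ∈ splits (v.drop i), L = (a :: v.take i) :: L' := by
  rw [splits]
  simp only [Finset.mem_biUnion, Finset.mem_attach, Finset.mem_image, true_and, Subtype.exists,
    Finset.mem_range, Nat.lt_succ_iff, exists_prop, @eq_comm _ _ L]

theorem flatten_eq_and_ne_nil_of_mem_splits : ∀ {v : Word} {L : List Word}, L ∈ splits v →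
    L.flatten = v ∧ ∀ u ∈ L, u ≠ []
  | [], L, h => by
    rw [splits_nil, Finset.mem_singleton] at h
    simp [h]
  | a :: v, _, h => by
    obtain ⟨i, -, L', hL', rfl⟩ := mem_splits_cons.mp h
    obtain ⟨hflat, hne⟩ := flatten_eq_and_ne_nil_of_mem_splits hL'
    refine ⟨by simp [hflat], ?_⟩
    rintro u (_ | ⟨_, hu⟩)
    · simp
    · exact hne u hu
termination_by v => v.length
decreasing_by simp only [List.length_drop, List.length_cons]; omega

theorem map_singleton_mem_splits (v : Word) : (v.map fun a => [a]) ∈ splits v := by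
  induction v with
  | nil => simp [splits_nil]
  | cons a v ih => exact mem_splits_cons.mpr ⟨0, Nat.zero_le _, _, by simpa using ih, by simp⟩

theorem List.eq_map_singleton_flatten {α : Type*} :
    ∀ {L : List (List α)}, (∀ u ∈ L, u.length = 1) → L = L.flatten.map fun a => [a]
  | [], _ => rfl
  | u :: L, h => by
    obtain ⟨a, rfl⟩ := List.length_eq_one_iff.mp (h u List.mem_cons_self)
    simpa using List.eq_map_singleton_flatten fun u hu => h u (List.mem_cons_of_mem _ hu)

theorem eq_map_singleton_of_mem_splits {v : Word} {L : List Word} (hL : L ∈ splits v)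
    (h : ∀ u ∈ L, u.length ≤ 1) : L = v.map fun a => [a] := by
  obtain ⟨hflat, hne⟩ := flatten_eq_and_ne_nil_of_mem_splits hL
  have : ∀ u ∈ L, u.length = 1 := fun u hu =>
    le_antisymm (h u hu) (List.length_pos_iff.mpr (hne u hu))
  rw [List.eq_map_singleton_flatten this, hflat]

theorem length_mem_Icc_of_weight_eq {v : Word} {s : ℕ+} (h : weight v = s) :
    v.length ∈ Finset.Icc 1 (s : ℕ) := by
  have hv : v ≠ [] := by rintro rfl; exact s.ne_zero h.symm
  exact Finset.mem_Icc.mpr ⟨List.length_pos_iff.mpr hv, h ▸ length_le_weight v⟩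

theorem filter_wordsOfWeight_length_eq_one (s : ℕ+) :
    (wordsOfWeight s).filter (fun w => w.length = 1) = {[s]} := by
  ext w
  simp only [Finset.mem_filter, mem_wordsOfWeight, Finset.mem_singleton, List.length_eq_one_iff]
  constructor
  · rintro ⟨hw, a, rfl⟩
    simpa [weight_cons, weight_nil, PNat.coe_inj] using hw
  · rintro rfl
    simp [weight_cons, weight_nil]

theorem sum_filter_splits_stufList_apply_singleton (q : R) (s : ℕ+) (v : Word) {n : ℕ}
    (hn : 1 ≤ n) :
    ∑ L ∈ (splits v).filter (fun L => L.length = n), stufList q L [s] =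
      if v.length = n ∧ weight v = s then q ^ (n - 1) else 0 := by
  have hsupp : ∀ L ∈ (splits v).filter (fun L => L.length = n), stufList q L [s] =
      if v.map (fun a => [a]) = L then stufList q (v.map fun a => [a]) [s] else 0 := by
    intro L hL
    split_ifs with h
    · rw [h]
    · by_contra h'
      exact h (eq_map_singleton_of_mem_splits (Finset.mem_filter.mp hL).1
        (fun u hu => length_le_of_stufList_apply_ne_zero q h' u hu)).symm
  rw [Finset.sum_congr rfl hsupp, Finset.sum_ite_eq]
  simp only [Finset.mem_filter, List.length_map]
  by_cases hlen : v.length = n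
  · have hv : v ≠ [] := by rintro rfl; simp at hlen; omega
    rw [if_pos ⟨map_singleton_mem_splits v, hlen⟩,
      stufList_map_singleton_apply_singleton q hv, hlen]
    simp
  · simp [hlen]

theorem rat_div_smul_pow_eq_smul_neg_pow [Algebra ℚ R] (q : R) (n k : ℕ) :
    ((-1 : ℚ) ^ k / n) • q ^ k = ((1 : ℚ) / n) • (-q) ^ k := by
  rw [div_eq_mul_one_div, mul_comm, mul_smul, neg_pow q]
  simp [Algebra.smul_def]

theorem qpi1_singleton_coeff [Algebra ℚ R] (q : R) (s : ℕ+) (v : Word) :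
    ∑ n ∈ Finset.Icc 1 (s : ℕ), ((-1 : ℚ) ^ (n - 1) / n) •
        ∑ L ∈ (splits v).filter (fun L => L.length = n), stufList q L [s] =
      if weight v = s then ((1 : ℚ) / v.length) • (-q) ^ (v.length - 1) else 0 := by
  rw [Finset.sum_congr rfl fun n hn =>
    by rw [sum_filter_splits_stufList_apply_singleton q s v (Finset.mem_Icc.mp hn).1]]
  simp only [ite_and, smul_ite, smul_zero]
  rw [Finset.sum_ite_eq]
  split_ifs with hlen hweight hweight
  · exact rat_div_smul_pow_eq_smul_neg_pow q _ _
  · rfl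
  · exact absurd (length_mem_Icc_of_weight_eq hweight) hlen
  · rfl

theorem qpi1_singleton_eq_sum [Algebra ℚ R] (q : R) (s : ℕ+) :
    qpi1 q [s] = ∑ v ∈ wordsOfWeight s,
      Finsupp.single v (((1 : ℚ) / v.length) • (-q) ^ (v.length - 1)) := by
  have hws : weight [s] = s := by simp [weight_cons, weight_nil]
  have hfilter : (wordsUpTo s).filter (fun v => weight v = s) = wordsOfWeight s := by
    ext v
    simp +contextual [mem_wordsUpTo, mem_wordsOfWeight]
  simp only [qpi1, hws, qpi1_singleton_coeff]
  rw [← hfilter, Finset.sum_filter]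
  refine Finset.sum_congr rfl fun v _ => ?_
  split_ifs <;> simp

/-- On a letter `y_s`,
`π₁(y_s) = y_s + Σ_{l≥2} ((-q)^{l-1}/l) Σ_{j_1+⋯+j_l=s, j_i≥1} y_{j_1} ⋯ y_{j_l}`. -/
theorem qpi1_letter [Algebra ℚ R] (q : R) (s : ℕ+) :
    qpi1 q [s] =
      Finsupp.single [s] (1 : R) +
        ∑ l ∈ Finset.Icc 2 (s : ℕ),
          ((1 : ℚ) / l) • ((-q) ^ (l - 1) •
            ∑ w ∈ (wordsOfWeight (s : ℕ)).filter (fun w => w.length = l),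
              Finsupp.single w (1 : R)) := by
  have hlength : ∀ v ∈ wordsOfWeight s, v.length ∈ Finset.Icc 1 (s : ℕ) :=
    fun v hv => length_mem_Icc_of_weight_eq (mem_wordsOfWeight.mp hv)
  have hIcc : Finset.Icc 1 (s : ℕ) = insert 1 (Finset.Icc 2 (s : ℕ)) :=
    (Finset.insert_Icc_succ_left_eq_Icc (a := 1) s.pos).symm
  rw [qpi1_singleton_eq_sum, ← Finset.sum_fiberwise_of_maps_to hlength, hIcc,
    Finset.sum_insert (by simp), filter_wordsOfWeight_length_eq_one]
  congr 1
  · simp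
  · refine Finset.sum_congr rfl fun l _ => ?_
    simp only [Finset.smul_sum, Finsupp.smul_single]
    refine Finset.sum_congr rfl fun v hv => ?_
    rw [(Finset.mem_filter.mp hv).2, smul_eq_mul, mul_one]
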